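/- In the two-state i.i.d. model with m = c n^{2+α} (c > 0, α > 0) and a_n = c' n^{-(1+β)} (c' > 0, β > α/4), let Ȳ_{Π(1)} = (1/m) Σ_{k=1}^m Z_1(k) be the empirical frequency of state 1 in user 1's obfuscated sequence, and let B^(n) = {x ∈ (0,1) : p_1 − Δ_n ≤ x ≤ p_1 + Δ_n} with Δ_n = n^{-(1+α/4)}. Then P(Ȳ_{Π(1)} ∈ B^(n)) → 1 as n → ∞. -/

import Mathlib

open Filter Set MeasureTheory ProbabilityTheory

open scoped Topology

/-! Given `R₁`, the bits `Z₁(k)` are independent `Bernoulli(Q₁)`, so the centred sum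
`∑ₖ (Z₁(k) - Q₁)` has uncorrelated terms: conditioning on `R₁` kills the cross terms and leaves
`E (∑ₖ (Z₁(k) - Q₁))² = m · E[Q₁(1 - Q₁)] ≤ m / 4`. Chebyshev then puts `Ȳ` within `Δₙ / 2` of
`Q₁` with probability at least `1 - 1 / (m Δₙ²) ≥ 1 - 1 / (c n^{α/2})`, while
`|Q₁ - p₁| ≤ aₙ ≤ Δₙ / 2` for large `n` because `β > α / 4`. -/

noncomputable section

/-- The uniform probability measure on the interval `[0, a]`. -/
def unifIcc (a : ℝ) : Measure ℝ :=
  (ENNReal.ofReal a)⁻¹ • (volume.restrict (Set.Icc 0 a))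

lemma mem_Icc_inter_Ioo_of_abs_sub_lt {x q p Δ : ℝ} (hxq : |x - q| < Δ / 2)
    (hqp : |q - p| ≤ Δ / 2) (hΔp : Δ < p) (hΔp' : Δ < 1 - p) :
    x ∈ Icc (p - Δ) (p + Δ) ∩ Ioo 0 1 := by
  rw [abs_lt] at hxq
  rw [abs_le] at hqp
  exact ⟨⟨by linarith, by linarith⟩, by linarith, by linarith⟩

section CondBernoulli

variable {Ω : Type*} {m mΩ : MeasurableSpace Ω} {μ : Measure Ω} {Q : Ω → ℝ}

lemma measurable_ite_one_zero {X : Ω → Bool} (hX : Measurable X) :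
    Measurable fun ω => if X ω then (1 : ℝ) else 0 :=
  (measurable_of_finite fun b : Bool => if b then (1 : ℝ) else 0).comp hX

lemma abs_ite_one_zero_le_one (b : Bool) : |(if b then (1 : ℝ) else 0)| ≤ 1 := by
  cases b <;> simp

lemma integrable_ite_one_zero [IsFiniteMeasure μ] {X : Ω → Bool} (hX : Measurable X) :
    Integrable (fun ω => if X ω then (1 : ℝ) else 0) μ :=
  .of_bound (measurable_ite_one_zero hX).aestronglyMeasurable 1
    (ae_of_all _ fun ω => abs_ite_one_zero_le_one (X ω))

lemma ae_abs_le_one_of_condExp_ite_eq {X : Ω → Bool}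
    (hXQ : μ[fun ω => if X ω then (1 : ℝ) else 0 | m] =ᵐ[μ] Q) : ∀ᵐ ω ∂μ, |Q ω| ≤ 1 := by
  filter_upwards [hXQ, ae_bdd_abs_condExp_of_ae_bdd_abs (m := m)
    (ae_of_all μ fun ω => abs_ite_one_zero_le_one (X ω))] with ω hQ hle
  rwa [← hQ]

lemma integral_eq_of_condExp_ae_eq [IsFiniteMeasure μ] (hm : m ≤ mΩ) {f g : Ω → ℝ}
    (h : μ[f | m] =ᵐ[μ] g) : ∫ ω, f ω ∂μ = ∫ ω, g ω ∂μ :=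
  (integral_condExp hm).symm.trans (integral_congr_ae h)

lemma condExp_mul_ite_one_zero [IsFiniteMeasure μ] (hm : m ≤ mΩ) {X : Ω → Bool}
    (hX : Measurable X) (hQm : StronglyMeasurable[m] Q)
    (hXQ : μ[fun ω => if X ω then (1 : ℝ) else 0 | m] =ᵐ[μ] Q) :
    μ[fun ω => Q ω * (if X ω then 1 else 0) | m] =ᵐ[μ] fun ω => Q ω ^ 2 := by
  filter_upwards [condExp_stronglyMeasurable_mul_of_bound hm hQm (integrable_ite_one_zero hX) 1
    (ae_abs_le_one_of_condExp_ite_eq hXQ), hXQ] with ω hpull hQ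
  exact hpull.trans (by rw [Pi.mul_apply, hQ, sq])

lemma condExp_ite_one_zero_mul_of_condIndepFun [StandardBorelSpace Ω] [IsFiniteMeasure μ]
    {hm : m ≤ mΩ} {X Y : Ω → Bool} (hX : Measurable X) (hY : Measurable Y)
    (hXY : CondIndepFun m hm X Y μ)
    (hXQ : μ[fun ω => if X ω then (1 : ℝ) else 0 | m] =ᵐ[μ] Q)
    (hYQ : μ[fun ω => if Y ω then (1 : ℝ) else 0 | m] =ᵐ[μ] Q) :
    μ[fun ω => (if X ω then (1 : ℝ) else 0) * (if Y ω then 1 else 0) | m]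
      =ᵐ[μ] fun ω => Q ω ^ 2 := by
  have hind : ∀ W : Ω → Bool,
      (fun ω => if W ω then (1 : ℝ) else 0) = (W ⁻¹' {true}).indicator fun _ => 1 := fun W => by
    ext ω; by_cases h : W ω <;> simp [h]
  have hprod : (fun ω => (if X ω then (1 : ℝ) else 0) * (if Y ω then 1 else 0))
      = (X ⁻¹' {true} ∩ Y ⁻¹' {true}).indicator fun _ => 1 := by
    ext ω; by_cases hx : X ω <;> by_cases hy : Y ω <;> simp [hx, hy]
  rw [hind] at hXQ hYQ
  rw [hprod]
  filter_upwards [(condIndepFun_iff_condExp_inter_preimage_eq_mul hX hY).1 hXY {true} {true}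
    (measurableSet_singleton _) (measurableSet_singleton _), hXQ, hYQ] with ω h hx hy
  rw [h, hx, hy, sq]

lemma integrable_sub_ite_mul_sub_ite [IsFiniteMeasure μ] {X Y : Ω → Bool} (hX : Measurable X)
    (hY : Measurable Y) (hQm : StronglyMeasurable[m] Q) (hm : m ≤ mΩ)
    (hXQ : μ[fun ω => if X ω then (1 : ℝ) else 0 | m] =ᵐ[μ] Q) :
    Integrable (fun ω => ((if X ω then 1 else 0) - Q ω) * ((if Y ω then 1 else 0) - Q ω)) μ := by
  have hQ : Integrable Q μ := integrable_condExp.congr hXQ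
  refine ((integrable_ite_one_zero hY).sub hQ).bdd_mul (c := 2)
    ((measurable_ite_one_zero hX).aestronglyMeasurable.sub (hQm.mono hm).aestronglyMeasurable) ?_
  filter_upwards [ae_abs_le_one_of_condExp_ite_eq hXQ] with ω hQω
  calc ‖(if X ω then (1 : ℝ) else 0) - Q ω‖ ≤ |(if X ω then (1 : ℝ) else 0)| + |Q ω| :=
        abs_sub _ _
    _ ≤ 2 := by linarith [abs_ite_one_zero_le_one (X ω)]

lemma integral_sub_mul_sub {f g h : Ω → ℝ} (hfg : Integrable (fun ω => f ω * g ω) μ)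
    (hhf : Integrable (fun ω => h ω * f ω) μ) (hhg : Integrable (fun ω => h ω * g ω) μ)
    (hhh : Integrable (fun ω => h ω * h ω) μ) :
    ∫ ω, (f ω - h ω) * (g ω - h ω) ∂μ
      = ∫ ω, f ω * g ω ∂μ - ∫ ω, h ω * f ω ∂μ - ∫ ω, h ω * g ω ∂μ + ∫ ω, h ω * h ω ∂μ := by
  calc ∫ ω, (f ω - h ω) * (g ω - h ω) ∂μ
      = ∫ ω, (f ω * g ω - h ω * f ω - h ω * g ω) + h ω * h ω ∂μ :=
        integral_congr_ae (ae_of_all _ fun ω => by ring)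
    _ = _ := by
      rw [integral_add (f := fun ω => f ω * g ω - h ω * f ω - h ω * g ω)
          ((hfg.sub hhf).sub hhg) hhh,
        integral_sub (f := fun ω => f ω * g ω - h ω * f ω) (hfg.sub hhf) hhg,
        integral_sub hfg hhf]

lemma integral_sub_ite_mul_sub_ite [StandardBorelSpace Ω] [IsFiniteMeasure μ] {hm : m ≤ mΩ}
    {Z : ℕ → Ω → Bool} (hZ : ∀ k, Measurable (Z k)) (hZind : iCondIndepFun m hm Z μ)
    (hQm : StronglyMeasurable[m] Q)
    (hZQ : ∀ k, μ[fun ω => if Z k ω then (1 : ℝ) else 0 | m] =ᵐ[μ] Q) (j k : ℕ) :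
    ∫ ω, ((if Z j ω then 1 else 0) - Q ω) * ((if Z k ω then 1 else 0) - Q ω) ∂μ
      = if j = k then ∫ ω, Q ω - Q ω ^ 2 ∂μ else 0 := by
  set f : ℕ → Ω → ℝ := fun i ω => if Z i ω then 1 else 0
  have hQ : Integrable Q μ := integrable_condExp.congr (hZQ 0)
  have hQ1 : ∀ᵐ ω ∂μ, ‖Q ω‖ ≤ 1 := ae_abs_le_one_of_condExp_ite_eq (hZQ 0)
  have hQQ : Integrable (fun ω => Q ω * Q ω) μ := hQ.bdd_mul hQ.aestronglyMeasurable hQ1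
  have hQf : ∀ i, Integrable (fun ω => Q ω * f i ω) μ := fun i =>
    (integrable_ite_one_zero (hZ i)).bdd_mul hQ.aestronglyMeasurable hQ1
  have hff : Integrable (fun ω => f j ω * f k ω) μ :=
    (integrable_ite_one_zero (hZ k)).bdd_mul (measurable_ite_one_zero (hZ j)).aestronglyMeasurable
      (ae_of_all _ fun ω => abs_ite_one_zero_le_one (Z j ω))
  have hQf_eq : ∀ i, ∫ ω, Q ω * f i ω ∂μ = ∫ ω, Q ω * Q ω ∂μ := fun i =>
    (integral_eq_of_condExp_ae_eq hm (condExp_mul_ite_one_zero hm (hZ i) hQm (hZQ i))).trans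
      (by simp only [sq])
  rw [integral_sub_mul_sub hff (hQf j) (hQf k) hQQ, hQf_eq j, hQf_eq k]
  split_ifs with hjk
  · subst hjk
    have hidem : (fun ω => f j ω * f j ω) = f j := by
      ext ω; by_cases h : Z j ω <;> simp [f, h]
    rw [hidem, integral_eq_of_condExp_ae_eq hm (hZQ j),
      integral_sub hQ (by simpa only [sq] using hQQ)]
    simp only [sq]; ring
  · rw [integral_eq_of_condExp_ae_eq hm (condExp_ite_one_zero_mul_of_condIndepFun (hZ j) (hZ k)
      (hZind.condIndepFun hjk) (hZQ j) (hZQ k))]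
    simp only [sq]; ring

lemma sq_sum_sub_ite (Z : ℕ → Ω → Bool) (M : ℕ) (ω : Ω) :
    (∑ k ∈ Finset.range M, ((if Z k ω then (1 : ℝ) else 0) - Q ω)) ^ 2
      = ∑ j ∈ Finset.range M, ∑ k ∈ Finset.range M,
          ((if Z j ω then 1 else 0) - Q ω) * ((if Z k ω then 1 else 0) - Q ω) := by
  rw [sq, Finset.sum_mul_sum]

lemma integrable_sq_sum_sub_ite [IsFiniteMeasure μ] (hm : m ≤ mΩ) {Z : ℕ → Ω → Bool}
    (hZ : ∀ k, Measurable (Z k)) (hQm : StronglyMeasurable[m] Q)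
    (hZQ : ∀ k, μ[fun ω => if Z k ω then (1 : ℝ) else 0 | m] =ᵐ[μ] Q) (M : ℕ) :
    Integrable (fun ω => (∑ k ∈ Finset.range M, ((if Z k ω then (1 : ℝ) else 0) - Q ω)) ^ 2) μ := by
  simp only [sq_sum_sub_ite]
  exact integrable_finsetSum _ fun j _ => integrable_finsetSum _ fun k _ =>
    integrable_sub_ite_mul_sub_ite (hZ j) (hZ k) hQm hm (hZQ j)

lemma integral_sq_sum_sub_ite [StandardBorelSpace Ω] [IsFiniteMeasure μ] {hm : m ≤ mΩ}
    {Z : ℕ → Ω → Bool} (hZ : ∀ k, Measurable (Z k)) (hZind : iCondIndepFun m hm Z μ)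
    (hQm : StronglyMeasurable[m] Q)
    (hZQ : ∀ k, μ[fun ω => if Z k ω then (1 : ℝ) else 0 | m] =ᵐ[μ] Q) (M : ℕ) :
    ∫ ω, (∑ k ∈ Finset.range M, ((if Z k ω then (1 : ℝ) else 0) - Q ω)) ^ 2 ∂μ
      = M * ∫ ω, Q ω - Q ω ^ 2 ∂μ := by
  have hint : ∀ j k, Integrable
      (fun ω => ((if Z j ω then (1 : ℝ) else 0) - Q ω) * ((if Z k ω then 1 else 0) - Q ω)) μ :=
    fun j k => integrable_sub_ite_mul_sub_ite (hZ j) (hZ k) hQm hm (hZQ j)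
  simp only [sq_sum_sub_ite]
  rw [integral_finsetSum _ fun j _ => integrable_finsetSum _ fun k _ => hint j k]
  simp only [integral_finsetSum _ fun k _ => hint _ k,
    integral_sub_ite_mul_sub_ite hZ hZind hQm hZQ, Finset.sum_ite_eq]
  rw [Finset.sum_congr rfl fun j hj => if_pos hj, Finset.sum_const, Finset.card_range,
    nsmul_eq_mul]

lemma measure_le_abs_le_ofReal_integral_sq_div [IsFiniteMeasure μ] {T : Ω → ℝ}
    (hT : Integrable (fun ω => T ω ^ 2) μ) {t : ℝ} (ht : 0 < t) :
    μ {ω | t ≤ |T ω|} ≤ ENNReal.ofReal ((∫ ω, T ω ^ 2 ∂μ) / t ^ 2) := by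
  have hset : {ω | t ≤ |T ω|} = {ω | t ^ 2 ≤ T ω ^ 2} := by
    ext ω
    simp only [mem_ofPred_eq, ← sq_abs (T ω), pow_le_pow_iff_left₀ ht.le (abs_nonneg _) two_ne_zero]
  rw [hset, ← ofReal_measureReal]
  refine ENNReal.ofReal_le_ofReal ((le_div_iff₀ (by positivity)).2 ?_)
  rw [mul_comm]
  exact mul_meas_ge_le_integral_of_nonneg (ae_of_all _ fun ω => sq_nonneg (T ω)) hT (t ^ 2)

-- Holds for every `Q`: when `Q - Q²` is not integrable the integral is `0`.
lemma integral_sub_sq_le_quarter [IsProbabilityMeasure μ] (Q : Ω → ℝ) :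
    ∫ ω, Q ω - Q ω ^ 2 ∂μ ≤ 1 / 4 := by
  by_cases hint : Integrable (fun ω => Q ω - Q ω ^ 2) μ
  · calc ∫ ω, Q ω - Q ω ^ 2 ∂μ ≤ ∫ _, (1 / 4 : ℝ) ∂μ :=
          integral_mono hint (integrable_const _) fun ω => by nlinarith [sq_nonneg (2 * Q ω - 1)]
      _ = 1 / 4 := by simp
  · rw [integral_undef hint]; norm_num

lemma measure_le_abs_mean_sub_le [StandardBorelSpace Ω] [IsProbabilityMeasure μ] {hm : m ≤ mΩ}
    {Z : ℕ → Ω → Bool} (hZ : ∀ k, Measurable (Z k)) (hZind : iCondIndepFun m hm Z μ)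
    (hQm : StronglyMeasurable[m] Q)
    (hZQ : ∀ k, μ[fun ω => if Z k ω then (1 : ℝ) else 0 | m] =ᵐ[μ] Q) {M : ℕ} (hM : 0 < M)
    {ε : ℝ} (hε : 0 < ε) :
    μ {ω | ε ≤ |(∑ k ∈ Finset.range M, if Z k ω then (1 : ℝ) else 0) / M - Q ω|}
      ≤ ENNReal.ofReal (1 / (4 * M * ε ^ 2)) := by
  have hM' : (0 : ℝ) < M := Nat.cast_pos.2 hM
  have hset : {ω | ε ≤ |(∑ k ∈ Finset.range M, if Z k ω then (1 : ℝ) else 0) / M - Q ω|}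
      = {ω | M * ε ≤ |∑ k ∈ Finset.range M, ((if Z k ω then (1 : ℝ) else 0) - Q ω)|} := by
    ext ω
    rw [mem_ofPred_eq, mem_ofPred_eq, Finset.sum_sub_distrib, Finset.sum_const, Finset.card_range,
      nsmul_eq_mul, ← le_div_iff₀' hM', ← abs_of_pos hM', ← abs_div, abs_of_pos hM', sub_div,
      mul_div_cancel_left₀ _ hM'.ne']
  calc _ = _ := congrArg μ hset
    _ ≤ ENNReal.ofReal ((M * ∫ ω, Q ω - Q ω ^ 2 ∂μ) / (M * ε) ^ 2) := by
      rw [← integral_sq_sum_sub_ite hZ hZind hQm hZQ]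
      exact measure_le_abs_le_ofReal_integral_sq_div (integrable_sq_sum_sub_ite hm hZ hQm hZQ M)
        (by positivity)
    _ ≤ ENNReal.ofReal (1 / (4 * M * ε ^ 2)) := by
      refine ENNReal.ofReal_le_ofReal ?_
      calc (M * ∫ ω, Q ω - Q ω ^ 2 ∂μ) / (M * ε) ^ 2 ≤ (M * (1 / 4)) / (M * ε) ^ 2 := by
            gcongr; exact integral_sub_sq_le_quarter Q
        _ = 1 / (4 * M * ε ^ 2) := by field_simp

lemma measure_compl_mean_mem_band_le [StandardBorelSpace Ω] [IsProbabilityMeasure μ]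
    {hm : m ≤ mΩ} {Z : ℕ → Ω → Bool} (hZ : ∀ k, Measurable (Z k))
    (hZind : iCondIndepFun m hm Z μ) (hQm : StronglyMeasurable[m] Q)
    (hZQ : ∀ k, μ[fun ω => if Z k ω then (1 : ℝ) else 0 | m] =ᵐ[μ] Q) {p Δ : ℝ}
    (hQp : ∀ᵐ ω ∂μ, |Q ω - p| ≤ Δ / 2) (hΔ : 0 < Δ) (hΔp : Δ < p) (hΔp' : Δ < 1 - p)
    {M : ℕ} (hM : 0 < M) :
    μ {ω | (∑ k ∈ Finset.range M, if Z k ω then (1 : ℝ) else 0) / M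
        ∈ Icc (p - Δ) (p + Δ) ∩ Ioo 0 1}ᶜ ≤ ENNReal.ofReal ((M * Δ ^ 2)⁻¹) := by
  calc _ ≤ μ {ω | Δ / 2 ≤ |(∑ k ∈ Finset.range M, if Z k ω then (1 : ℝ) else 0) / M - Q ω|} := by
        refine measure_mono_ae ?_
        filter_upwards [hQp] with ω hQω hω
        by_contra hlt
        exact hω (mem_Icc_inter_Ioo_of_abs_sub_lt (not_le.1 hlt) hQω hΔp hΔp')
    _ ≤ ENNReal.ofReal (1 / (4 * M * (Δ / 2) ^ 2)) :=
        measure_le_abs_mean_sub_le hZ hZind hQm hZQ hM (half_pos hΔ)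
    _ = ENNReal.ofReal ((M * Δ ^ 2)⁻¹) := by congr 1; ring

end CondBernoulli

lemma ae_mem_Icc_of_map_eq_unifIcc {Ω : Type*} [MeasurableSpace Ω] {μ : Measure Ω} {R : Ω → ℝ}
    {a : ℝ} (hR : AEMeasurable R μ) (hlaw : μ.map R = unifIcc a) :
    ∀ᵐ ω ∂μ, R ω ∈ Icc 0 a := by
  refine ae_of_ae_map hR (ae_iff.2 ?_)
  change μ.map R (Icc 0 a)ᶜ = 0
  rw [hlaw, unifIcc, Measure.smul_apply, Measure.restrict_apply measurableSet_Icc.compl,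
    compl_inter_self, measure_empty, smul_zero]

lemma abs_add_mul_sub_le {p r a : ℝ} (hp : p ∈ Icc 0 1) (hr : r ∈ Icc 0 a) :
    |p + (1 - 2 * p) * r - p| ≤ a := by
  rw [add_sub_cancel_left, abs_mul, abs_of_nonneg hr.1]
  exact (mul_le_of_le_one_left hr.1 (abs_le.2 ⟨by linarith [hp.2], by linarith [hp.1]⟩)).trans hr.2

lemma eventually_const_mul_rpow_neg_le_half {s t : ℝ} (hst : s < t) (C : ℝ) :
    ∀ᶠ x : ℝ in atTop, C * x ^ (-t) ≤ x ^ (-s) / 2 := by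
  have hsmall : Tendsto (fun x : ℝ => C * x ^ (-(t - s))) atTop (𝓝 0) := by
    simpa using (tendsto_rpow_neg_atTop (sub_pos.2 hst)).const_mul C
  filter_upwards [hsmall.eventually_lt_const one_half_pos, eventually_gt_atTop 0] with x hx hx0
  calc C * x ^ (-t) = C * x ^ (-(t - s)) * x ^ (-s) := by
        rw [mul_assoc, ← Real.rpow_add hx0]; ring_nf
    _ ≤ 1 / 2 * x ^ (-s) := mul_le_mul_of_nonneg_right hx.le (Real.rpow_nonneg hx0.le _)
    _ = x ^ (-s) / 2 := by ring

lemma tendsto_natCeil_mul_rpow_mul_sq_rpow_atTop {c α : ℝ} (hc : 0 < c) (hα : 0 < α) :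
    Tendsto (fun n : ℕ => (⌈c * (n : ℝ) ^ ((2 : ℝ) + α)⌉₊ : ℝ) * ((n : ℝ) ^ (-(1 + α / 4))) ^ 2)
      atTop atTop := by
  have hlow : Tendsto (fun n : ℕ => c * (n : ℝ) ^ (α / 2)) atTop atTop :=
    ((tendsto_rpow_atTop (by positivity)).comp tendsto_natCast_atTop_atTop).const_mul_atTop hc
  refine tendsto_atTop_mono' _ ?_ hlow
  filter_upwards [eventually_gt_atTop 0] with n hn
  have hn' : (0 : ℝ) < n := Nat.cast_pos.2 hn
  calc c * (n : ℝ) ^ (α / 2) = c * (n : ℝ) ^ ((2 : ℝ) + α) * ((n : ℝ) ^ (-(1 + α / 4))) ^ 2 := by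
        rw [← Real.rpow_natCast, ← Real.rpow_mul hn'.le, mul_assoc, ← Real.rpow_add hn']
        ring_nf
    _ ≤ _ := mul_le_mul_of_nonneg_right (Nat.le_ceil _) (by positivity)

lemma tendsto_measure_nhds_one_of_measure_compl_le {ι : Type*} {l : Filter ι} {Ω : ι → Type*}
    [∀ i, MeasurableSpace (Ω i)] (μ : ∀ i, Measure (Ω i)) [∀ i, IsProbabilityMeasure (μ i)]
    (s : ∀ i, Set (Ω i)) {b : ι → ENNReal} (hb : Tendsto b l (𝓝 0))
    (hs : ∀ᶠ i in l, μ i (s i)ᶜ ≤ b i) : Tendsto (fun i => μ i (s i)) l (𝓝 1) := by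
  have hlow : Tendsto (fun i => 1 - b i) l (𝓝 1) := by
    simpa using ENNReal.Tendsto.sub tendsto_const_nhds hb (Or.inl ENNReal.one_ne_top)
  refine tendsto_of_tendsto_of_tendsto_of_le_of_le' hlow tendsto_const_nhds ?_
    (.of_forall fun i => prob_le_one)
  filter_upwards [hs] with i hi
  rw [tsub_le_iff_right]
  calc 1 = μ i univ := measure_univ.symm
    _ ≤ μ i (s i) + μ i (s i)ᶜ := measure_univ_le_add_compl _
    _ ≤ μ i (s i) + b i := by gcongr

theorem user_one_empirical_frequency_concentrates_general
    (p₁ : ℝ) (hp₁ : p₁ ∈ Set.Ioo (0:ℝ) 1)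
    (c α c' β : ℝ) (hc : 0 < c) (hα : 0 < α) (hβ : α / 4 < β)
    (m : ℕ → ℕ) (hm : ∀ n, m n = ⌈c * (n : ℝ) ^ ((2:ℝ) + α)⌉₊)
    (a Δ : ℕ → ℝ)
    (ha : ∀ n, a n = c' * (n : ℝ) ^ (-(1 + β)))
    (hΔ : ∀ n, Δ n = (n : ℝ) ^ (-(1 + α / 4)))
    (Ω : ℕ → Type) (mΩ : ∀ n, MeasurableSpace (Ω n))
    [sb : ∀ n, StandardBorelSpace (Ω n)]
    (μ : (n : ℕ) → Measure (Ω n)) [hprob : ∀ n, IsProbabilityMeasure (μ n)]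
    (R : (n : ℕ) → Ω n → ℝ)
    (hRle : ∀ n, MeasurableSpace.comap (R n) inferInstance ≤ mΩ n)
    (hRlaw : ∀ n, Measure.map (R n) (μ n) = unifIcc (a n))
    (Z : (n : ℕ) → ℕ → Ω n → Bool) (hZmeas : ∀ n k, Measurable (Z n k))
    -- given `R₁`, the obfuscated bits are conditionally independent,
    (hZcondIndep : ∀ n, iCondIndepFun (MeasurableSpace.comap (R n) inferInstance) (hRle n)
      (m := fun _ : ℕ => inferInstance) (Z n) (μ n))
    -- and each is conditionally `Bernoulli(Q₁)` with `Q₁ = p₁ + (1 - 2 p₁) R₁`: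
    (hZcondLaw : ∀ n k,
      (μ n)[(fun ω => if Z n k ω then (1:ℝ) else 0) |
          MeasurableSpace.comap (R n) inferInstance]
        =ᵐ[μ n] fun ω => p₁ + (1 - 2 * p₁) * R n ω) :
    Tendsto (fun n => μ n {ω |
        (∑ k ∈ Finset.range (m n), (if Z n k ω then (1:ℝ) else 0)) / (m n : ℝ)
          ∈ Set.Icc (p₁ - Δ n) (p₁ + Δ n) ∩ Set.Ioo 0 1})
      atTop (nhds 1) := by
  obtain ⟨hp0, hp1⟩ := hp₁
  have hΔ0 : Tendsto Δ atTop (𝓝 0) := by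
    rw [funext hΔ]
    exact (tendsto_rpow_neg_atTop (y := 1 + α / 4) (by positivity)).comp tendsto_natCast_atTop_atTop
  have hbound : Tendsto (fun n => ENNReal.ofReal ((m n * Δ n ^ 2)⁻¹)) atTop (𝓝 0) := by
    simpa only [hm, hΔ, Pi.inv_apply, ENNReal.ofReal_zero] using (ENNReal.tendsto_ofReal
      (tendsto_natCeil_mul_rpow_mul_sq_rpow_atTop hc hα).inv_tendsto_atTop)
  refine tendsto_measure_nhds_one_of_measure_compl_le μ _ hbound ?_
  filter_upwards [eventually_gt_atTop 0, hΔ0.eventually_lt_const hp0,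
    hΔ0.eventually_lt_const (sub_pos.2 hp1), tendsto_natCast_atTop_atTop.eventually
      (eventually_const_mul_rpow_neg_le_half (by linarith : 1 + α / 4 < 1 + β) c')]
    with n hn hΔp hΔp' haΔ
  have hn' : (0 : ℝ) < n := Nat.cast_pos.2 hn
  have hQp : ∀ᵐ ω ∂μ n, |p₁ + (1 - 2 * p₁) * R n ω - p₁| ≤ Δ n / 2 := by
    filter_upwards [ae_mem_Icc_of_map_eq_unifIcc
      (measurable_iff_comap_le.2 (hRle n)).aemeasurable (hRlaw n)] with ω hω
    exact (abs_add_mul_sub_le ⟨hp0.le, hp1.le⟩ hω).trans (by rw [← ha, ← hΔ] at haΔ; exact haΔ)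
  exact measure_compl_mean_mem_band_le (hZmeas n) (hZcondIndep n)
    (measurable_const.add (measurable_const.mul (comap_measurable (R n)))).stronglyMeasurable
    (hZcondLaw n) hQp (by rw [hΔ]; exact Real.rpow_pos_of_pos hn' _) hΔp hΔp'
    (by rw [hm]; exact Nat.ceil_pos.2 (mul_pos hc (Real.rpow_pos_of_pos hn' _)))

/-- **Concentration of user 1's empirical frequency.**  In the two-state i.i.d. model with
`m = c n^{2+α}` observations (`c > 0`, `α > 0`) and noise level `a_n = c' n^{-(1+β)}`
(`c' > 0`, `β > α/4`), user `1`'s obfuscated bits `Z_1(1), …, Z_1(m)` are (conditionally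
on `R₁ ~ Uniform[0, a_n]`) i.i.d. `Bernoulli(Q₁)` with `Q₁ = p₁ + (1 - 2p₁) R₁`.  Then the
empirical frequency `Ȳ_{Π(1)} = (1/m) ∑_{k=1}^m Z_1(k)` of state `1` lies in
`B⁽ⁿ⁾ = {x ∈ (0,1) : p₁ - Δ_n ≤ x ≤ p₁ + Δ_n}`, `Δ_n = n^{-(1+α/4)}`, with probability
tending to `1` as `n → ∞`. -/
theorem user_one_empirical_frequency_concentrates
    (p₁ : ℝ) (hp₁ : p₁ ∈ Set.Ioo (0:ℝ) 1)
    (c α c' β : ℝ) (hc : 0 < c) (hα : 0 < α) (hc' : 0 < c') (hβ : α / 4 < β)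
    (m : ℕ → ℕ) (hm : ∀ n, m n = ⌈c * (n : ℝ) ^ ((2:ℝ) + α)⌉₊)
    (a Δ : ℕ → ℝ)
    (ha : ∀ n, a n = c' * (n : ℝ) ^ (-(1 + β)))
    (hΔ : ∀ n, Δ n = (n : ℝ) ^ (-(1 + α / 4)))
    (Ω : ℕ → Type) (mΩ : ∀ n, MeasurableSpace (Ω n))
    [sb : ∀ n, StandardBorelSpace (Ω n)]
    (μ : (n : ℕ) → Measure (Ω n)) [hprob : ∀ n, IsProbabilityMeasure (μ n)]
    (R : (n : ℕ) → Ω n → ℝ) (hRmeas : ∀ n, Measurable (R n))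
    (hRle : ∀ n, MeasurableSpace.comap (R n) inferInstance ≤ mΩ n)
    (hRlaw : ∀ n, Measure.map (R n) (μ n) = unifIcc (a n))
    (Z : (n : ℕ) → ℕ → Ω n → Bool) (hZmeas : ∀ n k, Measurable (Z n k))
    -- given `R₁`, the obfuscated bits are conditionally independent,
    (hZcondIndep : ∀ n, iCondIndepFun (MeasurableSpace.comap (R n) inferInstance) (hRle n)
      (m := fun _ : ℕ => inferInstance) (Z n) (μ n))
    -- and each is conditionally `Bernoulli(Q₁)` with `Q₁ = p₁ + (1 - 2 p₁) R₁`: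
    (hZcondLaw : ∀ n k,
      (μ n)[(fun ω => if Z n k ω then (1:ℝ) else 0) |
          MeasurableSpace.comap (R n) inferInstance]
        =ᵐ[μ n] fun ω => p₁ + (1 - 2 * p₁) * R n ω) :
    Tendsto (fun n => μ n {ω |
        (∑ k ∈ Finset.range (m n), (if Z n k ω then (1:ℝ) else 0)) / (m n : ℝ)
          ∈ Set.Icc (p₁ - Δ n) (p₁ + Δ n) ∩ Set.Ioo 0 1})
      atTop (nhds 1) :=
  user_one_empirical_frequency_concentrates_general p₁ hp₁ c α c' β hc hα hβ m hm a Δ ha hΔ Ω mΩ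
    (sb := sb) μ (hprob := hprob) R hRle hRlaw Z hZmeas hZcondIndep hZcondLaw
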